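/- arXiv:2601.08452 — 2 statements merged into one kernel-verified Lean document; each statement's English description precedes it below -/
import Mathlib

section
/- Let a = ⌊q/2⌋ and ℓ ≥ 2. Define f₁(γ) = √(a² + γ²) and f₂(γ) = √ℓ·(a - γ) for γ ∈ [0, a). Then min{f₁(γ), f₂(γ)} is uniquely maximized over [0, a) at γ* = a(ℓ - √(2ℓ - 1))/(ℓ - 1), where f₁(γ*) = f₂(γ*). -/
/-! The first term `√(a² + γ²)` is strictly increasing and the second `√ℓ (a - γ)` strictly
decreasing on `[0, a)`, so their minimum is strictly maximized exactly where they cross. Squaring,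
the crossing is the root of `(ℓ - 1) γ² - 2 ℓ a γ + (ℓ - 1) a² = 0` lying in `[0, a)`, namely
`γ* = a (ℓ - √(2ℓ - 1)) / (ℓ - 1)`. -/

open Real Set

theorem min_lt_min_of_strictMonoOn_of_strictAntiOn {α β : Type*} [LinearOrder α] [LinearOrder β]
    {s : Set α} {f g : α → β} (hf : StrictMonoOn f s) (hg : StrictAntiOn g s) {x₀ x : α}
    (hx₀ : x₀ ∈ s) (hx : x ∈ s) (hfg : f x₀ = g x₀) (hne : x ≠ x₀) :
    min (f x) (g x) < min (f x₀) (g x₀) := by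
  rw [hfg, min_self]
  rcases hne.lt_or_gt with h | h
  · exact (min_le_left _ _).trans_lt (hfg ▸ hf hx hx₀ h)
  · exact (min_le_right _ _).trans_lt (hg hx₀ hx h)

theorem strictMonoOn_sqrt_sq_add_sq (a : ℝ) : StrictMonoOn (fun γ : ℝ ↦ √(a ^ 2 + γ ^ 2)) (Ici 0) :=
  fun _ hx _ _ hxy ↦ sqrt_lt_sqrt (by positivity) (by gcongr)

theorem strictAnti_sqrt_mul_sub {L : ℝ} (hL : 0 < L) (a : ℝ) :
    StrictAnti (fun γ : ℝ ↦ √L * (a - γ)) :=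
  fun _ _ hxy ↦ mul_lt_mul_of_pos_left (by linarith) (sqrt_pos.mpr hL)

noncomputable def crossingPoint (a L : ℝ) : ℝ := a * (L - √(2 * L - 1)) / (L - 1)

section crossingPoint

variable {a L : ℝ}

theorem crossingPoint_mem_Ico (ha : 0 < a) (hL : 1 < L) : crossingPoint a L ∈ Ico 0 a := by
  have hs : √(2 * L - 1) ^ 2 = 2 * L - 1 := sq_sqrt (by linarith)
  have hs_one : 1 < √(2 * L - 1) := by nlinarith [sqrt_nonneg (2 * L - 1)]
  have hs_le : √(2 * L - 1) ≤ L := by nlinarith [sqrt_nonneg (2 * L - 1)]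
  have hL₁ : 0 < L - 1 := by linarith
  refine ⟨div_nonneg (mul_nonneg ha.le (by linarith)) hL₁.le, ?_⟩
  rw [crossingPoint, div_lt_iff₀ hL₁]
  nlinarith

theorem sq_add_crossingPoint_sq (hL : 1 < L) :
    a ^ 2 + crossingPoint a L ^ 2 = L * (a - crossingPoint a L) ^ 2 := by
  have hs : √(2 * L - 1) ^ 2 = 2 * L - 1 := sq_sqrt (by linarith)
  have hL₁ : L - 1 ≠ 0 := by linarith
  rw [crossingPoint]
  generalize √(2 * L - 1) = s at hs ⊢
  field_simp
  linear_combination (1 - L) * a ^ 2 * hs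

theorem sqrt_sq_add_crossingPoint_sq (ha : 0 < a) (hL : 1 < L) :
    √(a ^ 2 + crossingPoint a L ^ 2) = √L * (a - crossingPoint a L) := by
  rw [sq_add_crossingPoint_sq hL, sqrt_mul (by linarith),
    sqrt_sq (sub_nonneg.mpr (crossingPoint_mem_Ico ha hL).2.le)]

end crossingPoint

/-- for `a > 0` and `ℓ ≥ 2`, the function
`γ ↦ min { √(a² + γ²), √ℓ·(a - γ) }` on `[0, a)` is uniquely maximized at
`γ* = a(ℓ - √(2ℓ - 1))/(ℓ - 1)`, where the two terms coincide. -/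
theorem stmt7 (ℓ : ℕ) (hℓ : 2 ≤ ℓ) (a : ℝ) (ha : 0 < a) :
    a * ((ℓ : ℝ) - Real.sqrt (2 * (ℓ : ℝ) - 1)) / ((ℓ : ℝ) - 1) ∈ Set.Ico 0 a ∧
    (Real.sqrt (a ^ 2 + (a * ((ℓ : ℝ) - Real.sqrt (2 * (ℓ : ℝ) - 1)) / ((ℓ : ℝ) - 1)) ^ 2)
      = Real.sqrt ℓ * (a - a * ((ℓ : ℝ) - Real.sqrt (2 * (ℓ : ℝ) - 1)) / ((ℓ : ℝ) - 1))) ∧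
    ∀ γ ∈ Set.Ico (0 : ℝ) a,
      γ ≠ a * ((ℓ : ℝ) - Real.sqrt (2 * (ℓ : ℝ) - 1)) / ((ℓ : ℝ) - 1) →
      min (Real.sqrt (a ^ 2 + γ ^ 2)) (Real.sqrt ℓ * (a - γ)) <
        min (Real.sqrt (a ^ 2 +
            (a * ((ℓ : ℝ) - Real.sqrt (2 * (ℓ : ℝ) - 1)) / ((ℓ : ℝ) - 1)) ^ 2))
          (Real.sqrt ℓ *
            (a - a * ((ℓ : ℝ) - Real.sqrt (2 * (ℓ : ℝ) - 1)) / ((ℓ : ℝ) - 1))) := by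
  have hL : (1 : ℝ) < ℓ := by exact_mod_cast hℓ
  have hmem : crossingPoint a ℓ ∈ Ico 0 a := crossingPoint_mem_Ico ha hL
  have hcross := sqrt_sq_add_crossingPoint_sq ha hL
  refine ⟨hmem, hcross, fun γ hγ hne ↦ ?_⟩
  exact min_lt_min_of_strictMonoOn_of_strictAntiOn
    ((strictMonoOn_sqrt_sq_add_sq a).mono Ico_subset_Ici_self)
    ((strictAnti_sqrt_mul_sub (by linarith) a).strictAntiOn _) hmem hγ hcross hne
end

section
/- Let Λ ⊆ ℤ^ℓ be a lattice containing pℤ^ℓ, let C' = Λ ∩ {0,...,p-1}^ℓ regarded as a code in ℤ_p^ℓ, and let q ≥ p. Then the scaled code C = ⌊q/p⌋·C' ⊆ ℤ_q^ℓ has minimum toroidal distance (modulus q) at least ⌊q/p⌋ times the minimum Euclidean distance of Λ. -/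
/-!
Write `m = ⌊q/p⌋`. A competitor `m v₂ - q k` of `m v₁` on the torus is compared with the lattice
point `w = v₂ - p k ∈ Λ`, which differs from `v₁` because `v₁, v₂ ∈ {0, …, p-1}^ℓ`. Coordinatewise,
with `x = v₁ᵢ - v₂ᵢ` and `q = p m + r`, we have `m x + q k = m (x + p k) + r k`, and `|x| < p` forces
`x + p k` to have the sign of `k`; so `|m (x + p k)| ≤ |m x + q k|`, whence
`m d ≤ m ‖v₁ - w‖ ≤ ‖m v₁ - m v₂ + q k‖`.
-/

/-- Euclidean distance between integer vectors. -/
noncomputable def eucDist {ℓ : ℕ} (v₁ v₂ : Fin ℓ → ℤ) : ℝ :=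
  Real.sqrt (∑ i, ((v₁ i - v₂ i : ℤ) : ℝ) ^ 2)

/-- Toroidal distance modulus `q`: the least Euclidean norm of `v₁ - v₂ + k`
over all `k ∈ qℤ^ℓ`. -/
noncomputable def torusDist (q : ℕ) {ℓ : ℕ} (v₁ v₂ : Fin ℓ → ℤ) : ℝ :=
  sInf {r : ℝ | ∃ k : Fin ℓ → ℤ,
    r = Real.sqrt (∑ i, ((v₁ i - v₂ i + (q : ℤ) * k i : ℤ) : ℝ) ^ 2)}

lemma add_mul_mul_nonneg_of_abs_lt {x p : ℤ} (k : ℤ) (hx : |x| < p) : 0 ≤ (x + p * k) * k := by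
  obtain ⟨hlo, hhi⟩ := abs_lt.mp hx
  rcases lt_trichotomy k 0 with hk | rfl | hk
  · exact mul_nonneg_of_nonpos_of_nonpos (by nlinarith) hk.le
  · simp
  · exact mul_nonneg (by nlinarith) hk.le

lemma sq_mul_add_le_sq {m r x p : ℤ} (k : ℤ) (hm : 0 ≤ m) (hr : 0 ≤ r) (hx : |x| < p) :
    (m * (x + p * k)) ^ 2 ≤ (m * x + (p * m + r) * k) ^ 2 := by
  have hsign := add_mul_mul_nonneg_of_abs_lt k hx
  nlinarith [mul_nonneg (mul_nonneg hm hr) hsign, sq_nonneg (r * k)]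

lemma sq_natDiv_mul_add_le (p q : ℕ) {x : ℤ} (k : ℤ) (hx : |x| < p) :
    (((q / p : ℕ) : ℤ) * (x + p * k)) ^ 2 ≤ (((q / p : ℕ) : ℤ) * x + q * k) ^ 2 := by
  have hq : (q : ℤ) = p * ((q / p : ℕ) : ℤ) + ((q % p : ℕ) : ℤ) := by
    exact_mod_cast (Nat.div_add_mod q p).symm
  rw [hq]
  exact sq_mul_add_le_sq k (by positivity) (by positivity) hx

lemma eucDist_le_eucDist {ℓ : ℕ} {v w v' w' : Fin ℓ → ℤ}
    (h : ∀ i, (v i - w i) ^ 2 ≤ (v' i - w' i) ^ 2) : eucDist v w ≤ eucDist v' w' :=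
  Real.sqrt_le_sqrt <| Finset.sum_le_sum fun i _ => by exact_mod_cast h i

lemma eucDist_natCast_mul {ℓ : ℕ} (c : ℕ) (v w : Fin ℓ → ℤ) :
    eucDist (fun i => (c : ℤ) * v i) (fun i => (c : ℤ) * w i) = c * eucDist v w := by
  rw [eucDist, eucDist, ← Real.sqrt_sq (Nat.cast_nonneg c), ← Real.sqrt_mul (by positivity),
    Finset.mul_sum]
  congr 1
  refine Finset.sum_congr rfl fun i _ => ?_
  push_cast
  ring

lemma le_torusDist {q ℓ : ℕ} {v₁ v₂ : Fin ℓ → ℤ} {r : ℝ}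
    (h : ∀ k : Fin ℓ → ℤ, r ≤ eucDist v₁ (fun i => v₂ i - q * k i)) : r ≤ torusDist q v₁ v₂ := by
  refine le_csInf ⟨_, 0, rfl⟩ ?_
  rintro _ ⟨k, rfl⟩
  refine (h k).trans_eq ?_
  unfold eucDist
  congr! 4 with i
  ring

lemma eq_of_sub_mul_of_mem_Ico {ℓ p : ℕ} {v₁ v₂ k : Fin ℓ → ℤ}
    (h₁ : ∀ i, v₁ i ∈ Set.Ico (0 : ℤ) p) (h₂ : ∀ i, v₂ i ∈ Set.Ico (0 : ℤ) p)
    (h : v₁ = fun i => v₂ i - p * k i) : v₁ = v₂ := by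
  funext i
  have hdvd : (p : ℤ) ∣ v₁ i - v₂ i := ⟨-k i, by rw [h]; ring⟩
  have hlt : |v₁ i - v₂ i| < p := abs_sub_lt_of_nonneg_of_lt (h₁ i).1 (h₁ i).2 (h₂ i).1 (h₂ i).2
  exact sub_eq_zero.mp (Int.eq_zero_of_abs_lt_dvd hdvd hlt)

theorem stmt11_general (ℓ p q : ℕ)
    (Λ : AddSubgroup (Fin ℓ → ℤ))
    (hΛ : ∀ v : Fin ℓ → ℤ, (p : ℤ) • v ∈ Λ)
    (d : ℝ)
    (hd : IsLeast {r : ℝ | ∃ v₁ ∈ Λ, ∃ v₂ ∈ Λ, v₁ ≠ v₂ ∧ r = eucDist v₁ v₂} d) :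
    ∀ v₁ ∈ Λ, ∀ v₂ ∈ Λ,
      (∀ i, v₁ i ∈ Set.Ico (0 : ℤ) p) → (∀ i, v₂ i ∈ Set.Ico (0 : ℤ) p) →
      v₁ ≠ v₂ →
      ((q / p : ℕ) : ℝ) * d ≤
        torusDist q (fun i => ((q / p : ℕ) : ℤ) * v₁ i)
          (fun i => ((q / p : ℕ) : ℤ) * v₂ i) := by
  intro v₁ h₁ v₂ h₂ hb₁ hb₂ hne
  refine le_torusDist fun k => ?_
  set w : Fin ℓ → ℤ := fun i => v₂ i - p * k i
  have hw : w ∈ Λ := by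
    convert Λ.sub_mem h₂ (hΛ k) using 1
    funext i
    simp [w]
  have hvw : v₁ ≠ w := fun h => hne (eq_of_sub_mul_of_mem_Ico hb₁ hb₂ h)
  calc ((q / p : ℕ) : ℝ) * d ≤ ((q / p : ℕ) : ℝ) * eucDist v₁ w :=
        mul_le_mul_of_nonneg_left (hd.2 ⟨v₁, h₁, w, hw, hvw, rfl⟩) (Nat.cast_nonneg _)
    _ = eucDist (fun i => ((q / p : ℕ) : ℤ) * v₁ i) (fun i => ((q / p : ℕ) : ℤ) * w i) :=
        (eucDist_natCast_mul _ v₁ w).symm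
    _ ≤ _ := eucDist_le_eucDist fun i => by
        have hx : |v₁ i - v₂ i| < p :=
          abs_sub_lt_of_nonneg_of_lt (hb₁ i).1 (hb₁ i).2 (hb₂ i).1 (hb₂ i).2
        convert sq_natDiv_mul_add_le p q (k i) hx using 2 <;> ring

/-- scaling the code `C' = Λ ∩ {0, …, p-1}^ℓ` by `⌊q/p⌋` yields a
code in `ℤ_q^ℓ` whose minimum toroidal distance (modulus `q`) is at least
`⌊q/p⌋` times the minimum Euclidean distance of `Λ`. -/
theorem stmt11 (ℓ p q : ℕ) (hℓ : 1 ≤ ℓ) (hp : 2 ≤ p) (hq : p ≤ q)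
    (Λ : AddSubgroup (Fin ℓ → ℤ))
    (hΛ : ∀ v : Fin ℓ → ℤ, (p : ℤ) • v ∈ Λ)
    (d : ℝ)
    (hd : IsLeast {r : ℝ | ∃ v₁ ∈ Λ, ∃ v₂ ∈ Λ, v₁ ≠ v₂ ∧ r = eucDist v₁ v₂} d) :
    ∀ v₁ ∈ Λ, ∀ v₂ ∈ Λ,
      (∀ i, v₁ i ∈ Set.Ico (0 : ℤ) p) → (∀ i, v₂ i ∈ Set.Ico (0 : ℤ) p) →
      v₁ ≠ v₂ →
      ((q / p : ℕ) : ℝ) * d ≤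
        torusDist q (fun i => ((q / p : ℕ) : ℤ) * v₁ i)
          (fun i => ((q / p : ℕ) : ℤ) * v₂ i) :=
  stmt11_general ℓ p q Λ hΛ d hd
end
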